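/- arXiv:2411.14111 — 3 statements merged into one kernel-verified Lean document; each statement's English description precedes it below -/
import Mathlib

section
/- For real numbers a, b with b > a + 1 > 0, the sum over k ≥ 1 of Γ(k+a)/Γ(k+b) equals Γ(a+1)/((b-a-1)·Γ(b)). -/
open Real Filter Topology

lemma gamma_ratio_tendsto_zero {d : ℝ} (hd : 0 < d) :
    Tendsto (fun x : ℝ => Real.Gamma x / Real.Gamma (x + d)) atTop (𝓝 0) := by
  set c : ℝ := min d 1 with hc
  have hc0 : 0 < c := lt_min hd one_pos
  have hc1 : c ≤ 1 := min_le_right _ _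
  have hcd : c ≤ d := min_le_left _ _
  -- upper bound function
  have hU : Tendsto (fun x : ℝ => (1 + x⁻¹) * (x + 1) ^ (-c)) atTop (𝓝 0) := by
    have h1 : Tendsto (fun x : ℝ => 1 + x⁻¹) atTop (𝓝 (1 : ℝ)) := by
      simpa using (tendsto_const_nhds (x := (1:ℝ))).add tendsto_inv_atTop_zero
    have h2 : Tendsto (fun x : ℝ => (x + 1) ^ (-c)) atTop (𝓝 0) :=
      (tendsto_rpow_neg_atTop hc0).comp (tendsto_atTop_add_const_right _ 1 tendsto_id)
    simpa using h1.mul h2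
  refine tendsto_of_tendsto_of_tendsto_of_le_of_le' tendsto_const_nhds hU ?_ ?_
  · filter_upwards [eventually_ge_atTop (2 : ℝ)] with x hx
    have hx0 : (0 : ℝ) < x := by linarith
    positivity
  · filter_upwards [eventually_ge_atTop (2 : ℝ)] with x hx
    have hx0 : (0 : ℝ) < x := by linarith
    have hxc0 : (0 : ℝ) < x + c := by linarith
    have hΓx : 0 < Real.Gamma x := Real.Gamma_pos_of_pos hx0
    have hΓxc : 0 < Real.Gamma (x + c) := Real.Gamma_pos_of_pos hxc0
    have hΓxd : 0 < Real.Gamma (x + d) := Real.Gamma_pos_of_pos (by linarith)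
    -- step 1 : Γ(x+c) ≤ Γ(x+d)
    have step1 : Real.Gamma (x + c) ≤ Real.Gamma (x + d) := by
      rcases eq_or_lt_of_le hcd with h | h
      · rw [h]
      · exact le_of_lt (Real.Gamma_strictMonoOn_Ici (by simp only [Set.mem_Ici]; linarith)
          (by simp only [Set.mem_Ici]; linarith) (by linarith))
    -- step 2 : Γ(x+1) ≤ Γ(x+c) * (x+c)^(1-c)
    have step2 : Real.Gamma (x + 1) ≤ Real.Gamma (x + c) * (x + c) ^ (1 - c) := by
      rcases eq_or_lt_of_le hc1 with h | h
      · rw [h]; simp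
      · have key := Real.Gamma_mul_add_mul_le_rpow_Gamma_mul_rpow_Gamma
          (s := x + c) (t := x + c + 1) hxc0 (by linarith) hc0 (by linarith)
          (by ring : c + (1 - c) = 1)
        have harg : c * (x + c) + (1 - c) * (x + c + 1) = x + 1 := by ring
        rw [harg, Real.Gamma_add_one (ne_of_gt hxc0),
          Real.mul_rpow (le_of_lt hxc0) (le_of_lt hΓxc)] at key
        calc Real.Gamma (x + 1)
            ≤ Real.Gamma (x + c) ^ c * ((x + c) ^ (1 - c) * Real.Gamma (x + c) ^ (1 - c)) := key
          _ = Real.Gamma (x + c) * (x + c) ^ (1 - c) := by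
              rw [show Real.Gamma (x + c) ^ c * ((x + c) ^ (1 - c) * Real.Gamma (x + c) ^ (1 - c))
                  = Real.Gamma (x + c) ^ c * Real.Gamma (x + c) ^ (1 - c) * (x + c) ^ (1 - c) by
                  ring, ← Real.rpow_add hΓxc]
              norm_num
    -- combine
    have step3 : Real.Gamma x / Real.Gamma (x + d) ≤ (x + c) ^ (1 - c) / x := by
      have h1 : Real.Gamma x / Real.Gamma (x + d) ≤ Real.Gamma x / Real.Gamma (x + c) :=
        div_le_div_of_nonneg_left (le_of_lt hΓx) hΓxc step1
      refine h1.trans ?_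
      rw [div_le_div_iff₀ hΓxc hx0]
      have : x * Real.Gamma x = Real.Gamma (x + 1) := (Real.Gamma_add_one (ne_of_gt hx0)).symm
      nlinarith [step2]
    refine step3.trans ?_
    have step4 : (x + c) ^ (1 - c) ≤ (x + 1) ^ (1 - c) :=
      Real.rpow_le_rpow (le_of_lt hxc0) (by linarith) (by linarith)
    have step5 : (x + 1) ^ (1 - c) / x = (1 + x⁻¹) * (x + 1) ^ (-c) := by
      have hx1 : (0 : ℝ) < x + 1 := by linarith
      rw [show (1 - c) = 1 + (-c) by ring, Real.rpow_add hx1, Real.rpow_one]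
      field_simp
    rw [← step5]
    exact div_le_div_of_nonneg_right step4 hx0.le

/-- For `b > a + 1 > 0`, `∑_{k ≥ 1} Γ(k+a)/Γ(k+b) = Γ(a+1)/((b-a-1)·Γ(b))`. -/
theorem tsum_gamma_ratio (a b : ℝ) (h1 : 0 < a + 1) (h2 : a + 1 < b) :
    ∑' k : ℕ, Real.Gamma ((k : ℝ) + 1 + a) / Real.Gamma ((k : ℝ) + 1 + b)
      = Real.Gamma (a + 1) / ((b - a - 1) * Real.Gamma b) := by
  set d : ℝ := b - a - 1 with hd
  have hd0 : 0 < d := by simp [hd]; linarith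
  have hb0 : 0 < b := by linarith
  set g : ℕ → ℝ := fun n => Real.Gamma ((n : ℝ) + a + 1) / Real.Gamma ((n : ℝ) + b) with hg
  set f : ℕ → ℝ := fun k => Real.Gamma ((k : ℝ) + 1 + a) / Real.Gamma ((k : ℝ) + 1 + b) with hf
  have hka : ∀ k : ℕ, (0 : ℝ) < (k : ℝ) + a + 1 := fun k => by
    have : (0:ℝ) ≤ (k:ℝ) := Nat.cast_nonneg k; linarith
  have hkb : ∀ k : ℕ, (0 : ℝ) < (k : ℝ) + b := fun k => by
    have : (0:ℝ) ≤ (k:ℝ) := Nat.cast_nonneg k; linarith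
  have hfnonneg : ∀ k : ℕ, 0 ≤ f k := fun k => by
    have h1 : 0 < Real.Gamma ((k : ℝ) + 1 + a) := Real.Gamma_pos_of_pos (by have := hka k; linarith)
    have h2 : 0 < Real.Gamma ((k : ℝ) + 1 + b) := Real.Gamma_pos_of_pos (by have := hkb k; linarith)
    positivity
  -- telescoping identity
  have htel : ∀ k : ℕ, f k = (g k - g (k + 1)) / d := by
    intro k
    have hGa : 0 < Real.Gamma ((k : ℝ) + a + 1) := Real.Gamma_pos_of_pos (hka k)
    have hGb : 0 < Real.Gamma ((k : ℝ) + b) := Real.Gamma_pos_of_pos (hkb k)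
    have e1 : Real.Gamma ((k : ℝ) + 1 + a) = Real.Gamma ((k : ℝ) + a + 1) := by ring_nf
    have e2 : Real.Gamma ((k : ℝ) + 1 + b) = ((k : ℝ) + b) * Real.Gamma ((k : ℝ) + b) := by
      rw [show (k : ℝ) + 1 + b = ((k : ℝ) + b) + 1 by ring,
        Real.Gamma_add_one (ne_of_gt (hkb k))]
    have e3 : Real.Gamma (((k : ℕ) + 1 : ℕ) + a + 1)
        = ((k : ℝ) + a + 1) * Real.Gamma ((k : ℝ) + a + 1) := by
      push_cast
      rw [show (k : ℝ) + 1 + a + 1 = ((k : ℝ) + a + 1) + 1 by ring,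
        Real.Gamma_add_one (ne_of_gt (hka k))]
    have e4 : Real.Gamma (((k : ℕ) + 1 : ℕ) + b) = ((k : ℝ) + b) * Real.Gamma ((k : ℝ) + b) := by
      push_cast
      rw [show (k : ℝ) + 1 + b = ((k : ℝ) + b) + 1 by ring,
        Real.Gamma_add_one (ne_of_gt (hkb k))]
    simp only [hf, hg, e1, e2, e3, e4]
    have hkbne : ((k : ℝ) + b) ≠ 0 := ne_of_gt (hkb k)
    field_simp
    ring
  -- g tends to 0
  have hglim : Tendsto g atTop (𝓝 0) := by
    have hx : Tendsto (fun n : ℕ => (n : ℝ) + a + 1) atTop atTop :=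
      tendsto_atTop_add_const_right _ (a + 1) tendsto_natCast_atTop_atTop |>.congr
        (fun n => by ring)
    have := (gamma_ratio_tendsto_zero hd0).comp hx
    refine this.congr (fun n => ?_)
    simp only [Function.comp_apply, hg]
    congr 1
    rw [hd]; ring_nf
  -- HasSum
  have hg0 : g 0 = Real.Gamma (a + 1) / Real.Gamma b := by
    simp only [hg]; norm_num
  have hsum : HasSum f (g 0 / d) := by
    rw [hasSum_iff_tendsto_nat_of_nonneg hfnonneg _]
    have hps : ∀ n : ℕ, ∑ i ∈ Finset.range n, f i = (g 0 - g n) / d := by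
      intro n
      rw [show (g 0 - g n) / d = (∑ i ∈ Finset.range n, (g i - g (i + 1))) / d by
          rw [Finset.sum_range_sub' g n],
        Finset.sum_div]
      exact Finset.sum_congr rfl fun i _ => htel i
    have h : Tendsto (fun n : ℕ => (g 0 - g n) / d) atTop (𝓝 ((g 0 - 0) / d)) :=
      (tendsto_const_nhds.sub hglim).div_const d
    simp only [sub_zero] at h
    exact (h.congr fun n => (hps n).symm)
  rw [show (∑' k : ℕ, Real.Gamma ((k : ℝ) + 1 + a) / Real.Gamma ((k : ℝ) + 1 + b)) = ∑' k, f k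
      from rfl,
    hsum.tsum_eq, hg0, hd]
  rw [div_div, mul_comm]
end

section
/- Let (X_i) be i.i.d. random variables with X_1 > c almost surely for some c > 0 and finite mean. Then E[1/(X_1 + ··· + X_n)] = (1 + o(1)) · 1/(n·E[X_1]) as n → ∞. -/
open MeasureTheory ProbabilityTheory Filter Topology Finset

/-!
By the strong law of large numbers `n / (X_1 + ⋯ + X_n) → 1 / E[X_1]` almost surely, and the
lower bound `X_i > c` gives the uniform bound `n / (X_1 + ⋯ + X_n) ≤ 1 / c`, so dominated
convergence yields `E[n / (X_1 + ⋯ + X_n)] → 1 / E[X_1]`.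
-/

lemma le_integral_of_ae_le {Ω : Type*} [MeasurableSpace Ω] {μ : Measure Ω}
    [IsProbabilityMeasure μ] {f : Ω → ℝ} {c : ℝ} (hf : Integrable f μ)
    (h : ∀ᵐ ω ∂μ, c ≤ f ω) : c ≤ ∫ ω, f ω ∂μ := by
  simpa using integral_mono_ae (integrable_const c) hf h

lemma norm_natCast_mul_inv_sum_le {x : ℕ → ℝ} {c : ℝ} (hc : 0 < c) (hx : ∀ i, c ≤ x i)
    (n : ℕ) : ‖(n : ℝ) * (∑ i ∈ range n, x i)⁻¹‖ ≤ c⁻¹ := by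
  rcases n.eq_zero_or_pos with rfl | hn
  · simpa using hc.le
  have hn' : (0 : ℝ) < n := Nat.cast_pos.2 hn
  have hmean : c ≤ (∑ i ∈ range n, x i) / n := by
    rw [le_div_iff₀ hn']
    simpa [mul_comm] using card_nsmul_le_sum (range n) x c fun i _ => hx i
  rw [← div_eq_mul_inv, ← inv_div, norm_inv, Real.norm_of_nonneg (hc.le.trans hmean)]
  exact inv_anti₀ hc hmean

lemma tendsto_natCast_mul_inv_sum {x : ℕ → ℝ} {m : ℝ} (hm : m ≠ 0)
    (hx : Tendsto (fun n : ℕ => (∑ i ∈ range n, x i) / n) atTop (𝓝 m)) :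
    Tendsto (fun n : ℕ => (n : ℝ) * (∑ i ∈ range n, x i)⁻¹) atTop (𝓝 m⁻¹) := by
  refine (hx.inv₀ hm).congr fun n => ?_
  rw [inv_div, div_eq_mul_inv]

lemma tendsto_integral_natCast_mul_inv_sum {Ω : Type*} [MeasurableSpace Ω] {μ : Measure Ω}
    [IsProbabilityMeasure μ] {X : ℕ → Ω → ℝ} (hmeas : ∀ i, Measurable (X i))
    (hindep : Pairwise fun i j => IndepFun (X i) (X j) μ)
    (hident : ∀ i, IdentDistrib (X i) (X 0) μ μ) (hint : Integrable (X 0) μ)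
    {c : ℝ} (hc : 0 < c) (hbound : ∀ᵐ ω ∂μ, ∀ i, c ≤ X i ω) :
    Tendsto (fun n : ℕ => ∫ ω, (n : ℝ) * (∑ i ∈ range n, X i ω)⁻¹ ∂μ) atTop
      (𝓝 (∫ ω, X 0 ω ∂μ)⁻¹) := by
  have hm : 0 < ∫ ω, X 0 ω ∂μ :=
    hc.trans_le (le_integral_of_ae_le hint (hbound.mono fun ω h => h 0))
  rw [show (∫ ω, X 0 ω ∂μ)⁻¹ = ∫ _ : Ω, (∫ ω, X 0 ω ∂μ)⁻¹ ∂μ by simp]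
  refine tendsto_integral_of_dominated_convergence (fun _ => c⁻¹) (fun n => ?_)
    (integrable_const _) (fun n => ?_) ?_
  · have hsum : Measurable fun ω => ∑ i ∈ range n, X i ω :=
      Finset.measurable_sum _ fun i _ => hmeas i
    exact (measurable_const.mul hsum.inv).aestronglyMeasurable
  · exact hbound.mono fun ω hω => norm_natCast_mul_inv_sum_le hc hω n
  · filter_upwards [strong_law_ae_real X hint hindep hident] with ω hω
    exact tendsto_natCast_mul_inv_sum hm.ne' hω

/-- For i.i.d. random variables `X_i` with `X_1 > c > 0` a.s. and finite mean,
`E[1/(X_1 + ⋯ + X_n)] = (1 + o(1)) / (n E[X_1])`, i.e.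
`n E[X_1] · E[1/(X_1 + ⋯ + X_n)] → 1`. -/
theorem inverse_sum_expectation {Ω : Type*} [MeasurableSpace Ω] (μ : Measure Ω)
    [IsProbabilityMeasure μ] (X : ℕ → Ω → ℝ) (hmeas : ∀ i, Measurable (X i))
    (hindep : iIndepFun X μ)
    (hident : ∀ i, Measure.map (X i) μ = Measure.map (X 0) μ)
    (c : ℝ) (hc : 0 < c) (hbound : ∀ i, ∀ᵐ ω ∂μ, c < X i ω)
    (hint : Integrable (X 0) μ) :
    Tendsto (fun n : ℕ =>
        ((n : ℝ) * ∫ ω, X 0 ω ∂μ) * ∫ ω, (∑ i ∈ Finset.range n, X i ω)⁻¹ ∂μ)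
      atTop (nhds 1) := by
  set m := ∫ ω, X 0 ω ∂μ
  have hm : m ≠ 0 :=
    (hc.trans_le (le_integral_of_ae_le hint ((hbound 0).mono fun ω h => h.le))).ne'
  have hlim := tendsto_integral_natCast_mul_inv_sum hmeas
    (fun i j hij => hindep.indepFun hij)
    (fun i => ⟨(hmeas i).aemeasurable, (hmeas 0).aemeasurable, hident i⟩) hint hc
    (ae_all_iff.2 fun i => (hbound i).mono fun ω h => h.le)
  convert hlim.const_mul m using 2 with n
  · rw [integral_const_mul]
    ring
  · exact (mul_inv_cancel₀ hm).symm
end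

section
/- Let δ > −1, π ∈ (0,1], and define φ(λ, π) = π·∑_{ℓ=1}^∞ (Γ(ℓ+1+δ)/Γ(1+δ))·(Γ(1+δ+λ)/Γ(ℓ+1+δ+λ)) for λ > 1. Then φ(λ, π) = π(1+δ)/(λ−1), and the unique solution of φ(λ, π) = 1 is λ_π = 1 + π(1+δ). -/
open Filter Topology

/-- Γ(n+a)/Γ(n+a+μ) → 0 for a>0, μ>0. -/
lemma gamma_ratio_tendsto_zero_s15 (a μ : ℝ) (ha : 0 < a) (hμ : 0 < μ) :
    Tendsto (fun n : ℕ => Real.Gamma ((n : ℝ) + a) / Real.Gamma ((n : ℝ) + a + μ))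
      atTop (𝓝 0) := by
  set μ' : ℝ := min μ 1 with hμ'def
  have hμ'0 : 0 < μ' := lt_min hμ one_pos
  have hμ'1 : μ' ≤ 1 := min_le_right _ _
  have hμ'μ : μ' ≤ μ := min_le_left _ _
  have hx_tendsto : Tendsto (fun n : ℕ => (n : ℝ) + a) atTop atTop :=
    tendsto_atTop_add_const_right _ a tendsto_natCast_atTop_atTop
  have hbound : Tendsto (fun n : ℕ => 2 ^ (1 - μ') * ((n : ℝ) + a) ^ (-μ')) atTop (𝓝 0) := by
    have := ((tendsto_rpow_neg_atTop hμ'0).comp hx_tendsto).const_mul (2 ^ (1 - μ') : ℝ)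
    simpa using this
  refine squeeze_zero' ?_ ?_ hbound
  · filter_upwards [hx_tendsto.eventually_ge_atTop 2] with n hx
    have h1 : (0:ℝ) < (n : ℝ) + a := by linarith
    have h2 : (0:ℝ) < (n : ℝ) + a + μ := by linarith
    positivity
  · filter_upwards [hx_tendsto.eventually_ge_atTop 2] with n hx
    set x : ℝ := (n : ℝ) + a with hxdef
    have hx0 : (0:ℝ) < x := by linarith
    have hxμ'0 : (0:ℝ) < x + μ' := by linarith
    have hΓx : 0 < Real.Gamma x := Real.Gamma_pos_of_pos hx0
    have hΓμ' : 0 < Real.Gamma (x + μ') := Real.Gamma_pos_of_pos hxμ'0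
    have hΓμ : 0 < Real.Gamma (x + μ) := Real.Gamma_pos_of_pos (by linarith)
    -- monotonicity : Γ(x+μ') ≤ Γ(x+μ)
    have hmono : Real.Gamma (x + μ') ≤ Real.Gamma (x + μ) :=
      Real.Gamma_strictMonoOn_Ici.monotoneOn (by simp [Set.mem_Ici]; linarith)
        (by simp [Set.mem_Ici]; linarith) (by linarith)
    -- convexity bound : x * Γ x ≤ Γ(x+μ') * (x+μ')^(1-μ')
    have hconv := Real.convexOn_log_Gamma.2 (Set.mem_Ioi.2 hxμ'0)
      (Set.mem_Ioi.2 (show (0:ℝ) < x + 1 + μ' by linarith)) (le_of_lt hμ'0)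
      (by linarith : (0:ℝ) ≤ 1 - μ') (by ring)
    have hcomb : μ' * (x + μ') + (1 - μ') * (x + 1 + μ') = x + 1 := by ring
    rw [smul_eq_mul, smul_eq_mul, smul_eq_mul, smul_eq_mul, hcomb] at hconv
    have hΓadd : Real.Gamma (x + 1 + μ') = (x + μ') * Real.Gamma (x + μ') := by
      have : x + 1 + μ' = (x + μ') + 1 := by ring
      rw [this, Real.Gamma_add_one (ne_of_gt hxμ'0)]
    have hlog : Real.log (Real.Gamma (x + 1))
        ≤ Real.log (Real.Gamma (x + μ')) + (1 - μ') * Real.log (x + μ') := by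
      have := hconv
      simp only [Function.comp_apply] at this
      rw [hΓadd, Real.log_mul (ne_of_gt hxμ'0) (ne_of_gt hΓμ')] at this
      nlinarith [this]
    have hkey : x * Real.Gamma x ≤ Real.Gamma (x + μ') * (x + μ') ^ (1 - μ') := by
      have h1 : Real.Gamma (x + 1) ≤ Real.Gamma (x + μ') * (x + μ') ^ (1 - μ') := by
        have hrpow : (x + μ') ^ (1 - μ') = Real.exp ((1 - μ') * Real.log (x + μ')) := by
          rw [Real.rpow_def_of_pos hxμ'0, mul_comm]
        calc Real.Gamma (x + 1)
            = Real.exp (Real.log (Real.Gamma (x + 1))) :=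
              (Real.exp_log (Real.Gamma_pos_of_pos (by linarith))).symm
          _ ≤ Real.exp (Real.log (Real.Gamma (x + μ')) + (1 - μ') * Real.log (x + μ')) :=
              Real.exp_le_exp.2 hlog
          _ = Real.Gamma (x + μ') * (x + μ') ^ (1 - μ') := by
              rw [Real.exp_add, Real.exp_log hΓμ', hrpow]
      rwa [Real.Gamma_add_one (ne_of_gt hx0)] at h1
    -- chain the bounds
    have step1 : Real.Gamma x / Real.Gamma (x + μ) ≤ Real.Gamma x / Real.Gamma (x + μ') :=
      div_le_div_of_nonneg_left (le_of_lt hΓx) hΓμ' hmono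
    have step2 : Real.Gamma x / Real.Gamma (x + μ') ≤ (x + μ') ^ (1 - μ') / x := by
      rw [div_le_div_iff₀ hΓμ' hx0]
      nlinarith [hkey]
    have step3 : (x + μ') ^ (1 - μ') / x ≤ 2 ^ (1 - μ') * x ^ (-μ') := by
      have hxx : x + μ' ≤ 2 * x := by linarith
      have h1 : (x + μ') ^ (1 - μ') ≤ (2 * x) ^ (1 - μ') :=
        Real.rpow_le_rpow (le_of_lt hxμ'0) hxx (by linarith)
      have h2 : (2 * x) ^ (1 - μ') = 2 ^ (1 - μ') * x ^ (1 - μ') :=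
        Real.mul_rpow (by norm_num) (le_of_lt hx0)
      have h3 : x ^ (1 - μ') / x = x ^ (-μ') := by
        rw [show (1 - μ') = -μ' + 1 by ring, Real.rpow_add hx0, Real.rpow_one, mul_div_assoc,
          div_self (ne_of_gt hx0), mul_one]
      calc (x + μ') ^ (1 - μ') / x ≤ (2 * x) ^ (1 - μ') / x := by gcongr
        _ = 2 ^ (1 - μ') * (x ^ (1 - μ') / x) := by rw [h2]; ring
        _ = 2 ^ (1 - μ') * x ^ (-μ') := by rw [h3]
    calc Real.Gamma x / Real.Gamma (x + μ) ≤ (x + μ') ^ (1 - μ') / x := step1.trans step2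
      _ ≤ 2 ^ (1 - μ') * x ^ (-μ') := step3

lemma gamma_sum_eq (a lam : ℝ) (ha : 0 < a) (hlam : 1 < lam) :
    ∑' ℓ : ℕ, Real.Gamma (a + lam) / Real.Gamma a *
      (Real.Gamma ((ℓ:ℝ) + 1 + a) / Real.Gamma ((ℓ:ℝ) + 1 + a + lam)) = a / (lam - 1) := by
  have hl1 : (0:ℝ) < lam - 1 := by linarith
  set g : ℕ → ℝ := fun n => Real.Gamma ((n:ℝ) + 1 + a) / Real.Gamma ((n:ℝ) + a + lam) with hg
  have hkey : ∀ n : ℕ,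
      Real.Gamma ((n:ℝ) + 1 + a) / Real.Gamma ((n:ℝ) + 1 + a + lam)
        = (g n - g (n + 1)) / (lam - 1) := by
    intro n
    have h1 : (0:ℝ) < (n:ℝ) + 1 + a := by positivity
    have h2 : (0:ℝ) < (n:ℝ) + a + lam := by positivity
    have hΓ1 : (0:ℝ) < Real.Gamma ((n:ℝ) + 1 + a) := Real.Gamma_pos_of_pos h1
    have hΓ2 : (0:ℝ) < Real.Gamma ((n:ℝ) + a + lam) := Real.Gamma_pos_of_pos h2
    have e1 : Real.Gamma ((n:ℝ) + 1 + a + lam) = ((n:ℝ) + a + lam) * Real.Gamma ((n:ℝ) + a + lam) := by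
      rw [show (n:ℝ) + 1 + a + lam = ((n:ℝ) + a + lam) + 1 by ring,
        Real.Gamma_add_one (ne_of_gt h2)]
    have e2 : Real.Gamma (((n:ℕ) + 1 : ℕ) + 1 + a) = ((n:ℝ) + 1 + a) * Real.Gamma ((n:ℝ) + 1 + a) := by
      push_cast
      rw [show (n:ℝ) + 1 + 1 + a = ((n:ℝ) + 1 + a) + 1 by ring,
        Real.Gamma_add_one (ne_of_gt h1)]
    have e3 : (((n:ℕ) + 1 : ℕ) : ℝ) + a + lam = (n:ℝ) + 1 + a + lam := by push_cast; ring
    simp only [hg, e3]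
    rw [e1, e2]
    field_simp
    ring
  have htend : Filter.Tendsto g Filter.atTop (nhds 0) := by
    have h := gamma_ratio_tendsto_zero_s15 (1 + a) (lam - 1) (by linarith) hl1
    refine h.congr fun n => ?_
    simp only [hg]
    rw [show (n:ℝ) + (1 + a) = (n:ℝ) + 1 + a by ring,
      show (n:ℝ) + 1 + a + (lam - 1) = (n:ℝ) + a + lam by ring]
  have hsum : HasSum (fun ℓ : ℕ => Real.Gamma ((ℓ:ℝ) + 1 + a) / Real.Gamma ((ℓ:ℝ) + 1 + a + lam))
      (g 0 / (lam - 1)) := by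
    rw [hasSum_iff_tendsto_nat_of_nonneg (fun i => by positivity)]
    have heq : ∀ n : ℕ, ∑ i ∈ Finset.range n,
        Real.Gamma ((i:ℝ) + 1 + a) / Real.Gamma ((i:ℝ) + 1 + a + lam)
          = (g 0 - g n) / (lam - 1) := by
      intro n
      rw [Finset.sum_congr rfl fun i _ => hkey i, ← Finset.sum_div, Finset.sum_range_sub' g n]
    have : Filter.Tendsto (fun n : ℕ => (g 0 - g n) / (lam - 1)) Filter.atTop
        (nhds ((g 0 - 0) / (lam - 1))) :=
      (tendsto_const_nhds.sub htend).div_const _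
    rw [sub_zero] at this
    exact this.congr fun n => (heq n).symm
  rw [tsum_mul_left, hsum.tsum_eq]
  have hΓa : Real.Gamma a ≠ 0 := ne_of_gt (Real.Gamma_pos_of_pos ha)
  have hΓal : Real.Gamma (a + lam) ≠ 0 := ne_of_gt (Real.Gamma_pos_of_pos (by linarith))
  have hg0 : g 0 = a * Real.Gamma a / Real.Gamma (a + lam) := by
    simp only [hg, Nat.cast_zero]
    rw [show (0:ℝ) + 1 + a = a + 1 by ring, show (0:ℝ) + a + lam = a + lam by ring,
      Real.Gamma_add_one (ne_of_gt ha)]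
  rw [hg0]
  field_simp

/-- For `δ > -1`, `π ∈ (0,1]` and `λ > 1`, the function
`φ(λ,π) = π ∑_{ℓ≥1} (Γ(ℓ+1+δ)/Γ(1+δ))(Γ(1+δ+λ)/Γ(ℓ+1+δ+λ))` equals `π(1+δ)/(λ-1)`,
and the unique solution of `φ(λ,π) = 1` is `λ_π = 1 + π(1+δ)`. -/
theorem malthusian_parameter (δ : ℝ) (hδ : -1 < δ) (π : ℝ) (hπ : π ∈ Set.Ioc (0:ℝ) 1) :
    (∀ lam : ℝ, 1 < lam →
      π * ∑' ℓ : ℕ, Real.Gamma ((ℓ:ℝ) + 1 + 1 + δ) / Real.Gamma (1 + δ) *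
          (Real.Gamma (1 + δ + lam) / Real.Gamma ((ℓ:ℝ) + 1 + 1 + δ + lam))
        = π * (1 + δ) / (lam - 1))
    ∧ ∀ lam : ℝ, 1 < lam →
      (π * ∑' ℓ : ℕ, Real.Gamma ((ℓ:ℝ) + 1 + 1 + δ) / Real.Gamma (1 + δ) *
          (Real.Gamma (1 + δ + lam) / Real.Gamma ((ℓ:ℝ) + 1 + 1 + δ + lam)) = 1
        ↔ lam = 1 + π * (1 + δ)) := by
  have ha : (0:ℝ) < 1 + δ := by linarith
  have key : ∀ lam : ℝ, 1 < lam →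
      π * ∑' ℓ : ℕ, Real.Gamma ((ℓ:ℝ) + 1 + 1 + δ) / Real.Gamma (1 + δ) *
          (Real.Gamma (1 + δ + lam) / Real.Gamma ((ℓ:ℝ) + 1 + 1 + δ + lam))
        = π * (1 + δ) / (lam - 1) := by
    intro lam hlam
    have hterm : ∀ ℓ : ℕ,
        Real.Gamma ((ℓ:ℝ) + 1 + 1 + δ) / Real.Gamma (1 + δ) *
          (Real.Gamma (1 + δ + lam) / Real.Gamma ((ℓ:ℝ) + 1 + 1 + δ + lam))
        = Real.Gamma ((1 + δ) + lam) / Real.Gamma (1 + δ) *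
          (Real.Gamma ((ℓ:ℝ) + 1 + (1 + δ)) / Real.Gamma ((ℓ:ℝ) + 1 + (1 + δ) + lam)) := by
      intro ℓ
      rw [show (ℓ:ℝ) + 1 + 1 + δ = (ℓ:ℝ) + 1 + (1 + δ) by ring,
        show (ℓ:ℝ) + 1 + (1 + δ) + lam = (ℓ:ℝ) + 1 + 1 + δ + lam by ring]
      ring
    rw [tsum_congr hterm, gamma_sum_eq (1 + δ) lam ha hlam]
    ring
  refine ⟨key, fun lam hlam => ?_⟩
  rw [key lam hlam]
  have hl1 : lam - 1 ≠ 0 := by intro h; linarith [hlam, h]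
  constructor
  · intro h
    have : π * (1 + δ) = lam - 1 := by
      field_simp at h
      linarith
    linarith
  · intro h
    rw [h]
    have hpd : π * (1 + δ) ≠ 0 := by
      have := hπ.1
      positivity
    rw [show 1 + π * (1 + δ) - 1 = π * (1 + δ) by ring, div_self hpd]
end
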